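/- Adding a single pixel P ∉ D to a digital object D cannot decrease the number of holes while changing the number of components: if h(D ∪ {P}) < h(D) then c(D ∪ {P}) = c(D). -/

import Mathlib

open Set

/-- A point of `ℤ²`, identified with the pixel centered there. -/
abbrev Pt := ℤ × ℤ

/-- Two pixels are 0-adjacent if they are distinct and share at least a vertex. -/
def adj0 (a b : Pt) : Prop := a ≠ b ∧ |a.1 - b.1| ≤ 1 ∧ |a.2 - b.2| ≤ 1

/-- Two pixels are 1-adjacent if they share an edge. -/
def adj1 (a b : Pt) : Prop := |a.1 - b.1| + |a.2 - b.2| = 1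

/-- Adjacency parameterized by `α ∈ {0,1}`. -/
def adjA (α : ℕ) : Pt → Pt → Prop := if α = 0 then adj0 else adj1

/-- Connectivity within `S` by a path of consecutively `adj`-adjacent points. -/
def connIn (adj : Pt → Pt → Prop) (S : Set Pt) (x y : Pt) : Prop :=
  Relation.ReflTransGen (fun u v => u ∈ S ∧ v ∈ S ∧ adj u v) x y

/-- The connected components of `S` with respect to `adj`. -/
def components (adj : Pt → Pt → Prop) (S : Set Pt) : Set (Set Pt) :=
  {C | ∃ x ∈ S, C = {y | y ∈ S ∧ connIn adj S x y}}

/-- Number of 0-connected components of `S`. -/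
noncomputable def ccount (S : Set Pt) : ℕ := (components adj0 S).ncard

/-- Number of holes: finite 1-components of the complement of `S`. -/
noncomputable def hcount (S : Set Pt) : ℕ :=
  {C | C ∈ components adj1 Sᶜ ∧ C.Finite}.ncard

/-- The four lattice points `{q, q+(1,0), q+(0,1), q+(1,1)}`: used both for the
corner set of the pixel `q` (in shifted lattice coordinates) and for the 2-block
with base point `q`. -/
def cell (q : Pt) : Set Pt := {q, (q.1 + 1, q.2), (q.1, q.2 + 1), (q.1 + 1, q.2 + 1)}

/-- Number of distinct grid points occurring as corners of pixels of `S`. -/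
noncomputable def vcount (S : Set Pt) : ℕ := (⋃ p ∈ S, cell p).ncard

/-- Number of 2-blocks (2×2 grid squares of pixels) contained in `S`. -/
noncomputable def bcount (S : Set Pt) : ℕ := {q | cell q ⊆ S}.ncard

/-- Diagonal adjacency: 0-adjacent but not 1-adjacent. -/
def diagAdj (a b : Pt) : Prop := |a.1 - b.1| = 1 ∧ |a.2 - b.2| = 1

/-- `w` is a 0-tunnel of `S`: exactly two pixels of `S` have `w` as a corner,
and these two pixels meet only diagonally at `w`. -/
def tunnelAt (S : Set Pt) (w : Pt) : Prop :=
  ∃ a b : Pt, a ∈ S ∧ b ∈ S ∧ diagAdj a b ∧ {p | p ∈ S ∧ w ∈ cell p} = {a, b}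

/-- Number of 0-tunnels of `S`. -/
noncomputable def tcount (S : Set Pt) : ℕ := {w | tunnelAt S w}.ncard

/-- `S` is tunnel-free. -/
def TunnelFree (S : Set Pt) : Prop := ∀ w : Pt, ¬ tunnelAt S w

/-- A consequence-style notion of one-dimensionality: no pixel of `M` is
`adj`-adjacent to three pairwise `adj`-adjacent pixels of `M`. -/
def OneDim (adj : Pt → Pt → Prop) (M : Set Pt) : Prop :=
  ∀ p ∈ M, ¬ ∃ a ∈ M, ∃ b ∈ M, ∃ c ∈ M,
    adj p a ∧ adj p b ∧ adj p c ∧ adj a b ∧ adj a c ∧ adj b c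

/-- `M` is `adj`-connected. -/
def ConnectedObj (adj : Pt → Pt → Prop) (M : Set Pt) : Prop :=
  ∀ x ∈ M, ∀ y ∈ M, connIn adj M x y

/-- A digital curve: a nonempty finite 0-connected one-dimensional digital object. -/
def DigitalCurve (M : Set Pt) : Prop :=
  M.Finite ∧ M.Nonempty ∧ ConnectedObj adj0 M ∧ OneDim adj0 M

/-- A simple closed digital curve with respect to `adj`: a cyclic sequence of
pixels in which the `adj`-adjacent pairs are exactly the cyclically consecutive
ones, and which is one-dimensional. -/
def SimpleClosedCurve (adj : Pt → Pt → Prop) (M : Set Pt) : Prop :=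
  ∃ l : ℕ, 0 < l ∧ ∃ f : ZMod l → Pt, Function.Injective f ∧ Set.range f = M ∧
    (∀ i j : ZMod l, adj (f i) (f j) ↔ j = i + 1 ∨ i = j + 1) ∧ OneDim adj M

/-- A simple digital arc: a nonempty 0-connected proper subset of a simple
closed digital curve. -/
def SimpleArc (adj : Pt → Pt → Prop) (M : Set Pt) : Prop :=
  M.Nonempty ∧ ConnectedObj adj0 M ∧
    ∃ ρ : Set Pt, SimpleClosedCurve adj ρ ∧ M ⊆ ρ ∧ M ≠ ρ


/-!
If an edge-neighbour `Q` of `P` lies outside `D`, every hole of `D` contains a point other than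
`P` (namely `Q` if `P` is in the hole), and the component of that point in the complement of
`D ∪ {P}` is a hole inside it; distinct holes of `D` yield distinct such holes, so the number of
holes cannot drop. Hence a drop forces all four edge-neighbours of `P` into `D`. Then every
0-neighbour of `P` in `D` is 0-connected within `D` to the northern one, so `P` joins exactly one
component of `D` and merges none.
-/

def holes (S : Set Pt) : Set (Set Pt) := {C | C ∈ components adj1 Sᶜ ∧ C.Finite}

def comp (adj : Pt → Pt → Prop) (S : Set Pt) (x : Pt) : Set Pt :=
  {y | y ∈ S ∧ connIn adj S x y}

section Connectivity

variable {adj : Pt → Pt → Prop} {S T : Set Pt} {x y : Pt}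

lemma mem_comp_self (hx : x ∈ S) : x ∈ comp adj S x := ⟨hx, .refl⟩

lemma comp_mem_components (hx : x ∈ S) : comp adj S x ∈ components adj S := ⟨x, hx, rfl⟩

lemma connIn_symm [Std.Symm adj] (h : connIn adj S x y) : connIn adj S y x := by
  induction h with
  | refl => exact .refl
  | tail _ hstep ih => exact .head ⟨hstep.2.1, hstep.1, symm_of adj hstep.2.2⟩ ih

lemma connIn_mono (hST : S ⊆ T) (h : connIn adj S x y) : connIn adj T x y :=
  h.lift id fun _ _ hs => ⟨hST hs.1, hST hs.2.1, hs.2.2⟩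

lemma eq_or_mem_of_connIn (h : connIn adj S x y) : x = y ∨ y ∈ S := by
  rcases h.cases_tail with rfl | ⟨_, -, -, hy, -⟩
  exacts [.inl rfl, .inr hy]

lemma comp_congr [Std.Symm adj] (h : connIn adj S x y) : comp adj S x = comp adj S y :=
  ext fun _ => ⟨fun hz => ⟨hz.1, (connIn_symm h).trans hz.2⟩,
    fun hz => ⟨hz.1, h.trans hz.2⟩⟩

lemma eq_comp_of_mem [Std.Symm adj] {C : Set Pt} (hC : C ∈ components adj S)
    (hx : x ∈ C) : C = comp adj S x := by
  obtain ⟨y, -, rfl⟩ := hC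
  exact comp_congr hx.2

lemma components_eq_of_mem [Std.Symm adj] {C₁ C₂ : Set Pt}
    (h₁ : C₁ ∈ components adj S) (h₂ : C₂ ∈ components adj S) (hx₁ : x ∈ C₁) (hx₂ : x ∈ C₂) :
    C₁ = C₂ :=
  (eq_comp_of_mem h₁ hx₁).trans (eq_comp_of_mem h₂ hx₂).symm

/-- `C ↦ C ∩ T` is a bijection between the components. -/
lemma ncard_components_eq_of_subset [Std.Symm adj] (hTS : T ⊆ S)
    (hmeet : ∀ x ∈ S, ∃ y ∈ T, connIn adj S x y)
    (hconn : ∀ x ∈ T, ∀ y ∈ T, connIn adj S x y → connIn adj T x y) :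
    (components adj S).ncard = (components adj T).ncard := by
  have hrestrict : ∀ x ∈ T, comp adj S x ∩ T = comp adj T x := fun x hx =>
    ext fun y => ⟨fun hy => ⟨hy.2, hconn x hx y hy.2 hy.1.2⟩,
      fun hy => ⟨⟨hTS hy.1, connIn_mono hTS hy.2⟩, hy.1⟩⟩
  have hrep : ∀ C ∈ components adj S, ∃ y ∈ T, C = comp adj S y := by
    rintro C ⟨x, hx, rfl⟩
    obtain ⟨y, hy, hxy⟩ := hmeet x hx
    exact ⟨y, hy, comp_congr hxy⟩
  have himage : (· ∩ T) '' components adj S = components adj T := by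
    ext C
    constructor
    · rintro ⟨C, hC, rfl⟩
      obtain ⟨y, hy, rfl⟩ := hrep C hC
      exact show comp adj S y ∩ T ∈ _ from hrestrict y hy ▸ comp_mem_components hy
    · rintro ⟨y, hy, rfl⟩
      exact ⟨comp adj S y, comp_mem_components (hTS hy), hrestrict y hy⟩
  have hinj : InjOn (· ∩ T) (components adj S) := by
    intro C₁ h₁ C₂ h₂ he
    obtain ⟨y, hy, rfl⟩ := hrep C₁ h₁
    have hyT : y ∈ comp adj S y ∩ T := (hrestrict y hy).symm ▸ mem_comp_self hy
    have hyT₂ : y ∈ C₂ ∩ T := by simpa only [he] using hyT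
    exact components_eq_of_mem h₁ h₂ hyT.1 hyT₂.1
  rw [← himage, hinj.ncard_image]

end Connectivity

section RemovePoint

variable {adj : Pt → Pt → Prop} {S : Set Pt} {P x y : Pt}

lemma comp_diff_eq (hPx : P ∉ comp adj S x) : comp adj (S \ {P}) x = comp adj S x := by
  refine Subset.antisymm (fun y hy => ⟨hy.1.1, connIn_mono sdiff_subset hy.2⟩) ?_
  rintro y ⟨hy, hxy⟩
  refine ⟨⟨hy, fun h => hPx (h ▸ ⟨hy, hxy⟩)⟩, ?_⟩
  clear hy
  have hne : ∀ {z}, connIn adj S x z → z ∈ S → z ≠ P := fun hz hzS h => hPx (h ▸ ⟨hzS, hz⟩)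
  induction hxy with
  | refl => exact .refl
  | @tail b c hb hstep ih =>
    exact ih.tail ⟨⟨hstep.1, hne hb hstep.1⟩, ⟨hstep.2.1, hne (hb.tail hstep) hstep.2.1⟩, hstep.2.2⟩

lemma comp_diff_subset {C : Set Pt} (hC : C ∈ components adj S) (hx : x ∈ C) :
    comp adj (S \ {P}) x ⊆ C := by
  obtain ⟨z, -, rfl⟩ := hC
  exact fun y hy => ⟨hy.1.1, hx.2.trans (connIn_mono sdiff_subset hy.2)⟩

lemma connIn_diff_or_exists_adj (hxP : x ≠ P) (h : connIn adj S x y) :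
    connIn adj (S \ {P}) x y ∨ ∃ q, adj q P ∧ connIn adj (S \ {P}) x q := by
  induction h with
  | refl => exact .inl .refl
  | @tail b c _ hstep ih =>
    refine ih.elim (fun hxb => ?_) .inr
    by_cases hcP : c = P
    · exact .inr ⟨b, hcP ▸ hstep.2.2, hxb⟩
    have hbP : b ≠ P := by
      rcases eq_or_mem_of_connIn hxb with rfl | hb
      exacts [hxP, hb.2]
    exact .inl (hxb.tail ⟨⟨hstep.1, hbP⟩, ⟨hstep.2.1, hcP⟩, hstep.2.2⟩)

end RemovePoint

instance : Std.Symm adj0 where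
  symm a b h := ⟨h.1.symm, abs_sub_comm a.1 b.1 ▸ h.2.1, abs_sub_comm a.2 b.2 ▸ h.2.2⟩

instance : Std.Symm adj1 where
  symm a b (h : _ = _) := show _ = _ by rwa [abs_sub_comm b.1, abs_sub_comm b.2]

lemma adj1_ne {a b : Pt} (h : adj1 a b) : a ≠ b := by
  rintro rfl
  simp [adj1] at h

lemma finite_setOf_adj1 (P : Pt) : {q | adj1 q P}.Finite := by
  refine ((finite_Icc (P.1 - 1) (P.1 + 1)).prod (finite_Icc (P.2 - 1) (P.2 + 1))).subset ?_
  intro q (hq : _ = _)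
  have h1 := abs_le.mp (show |q.1 - P.1| ≤ 1 by linarith [abs_nonneg (q.2 - P.2)])
  have h2 := abs_le.mp (show |q.2 - P.2| ≤ 1 by linarith [abs_nonneg (q.1 - P.1)])
  simp only [mem_prod, mem_Icc]
  omega

lemma adj0_iff {a b : Pt} : adj0 a b ↔ ¬(a.1 = b.1 ∧ a.2 = b.2) ∧
    -1 ≤ a.1 - b.1 ∧ a.1 - b.1 ≤ 1 ∧ -1 ≤ a.2 - b.2 ∧ a.2 - b.2 ≤ 1 := by
  simp only [adj0, abs_le, Ne, Prod.ext_iff, and_assoc]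

lemma connIn_adj0_north {D : Set Pt} {P : Pt} (hnbr : ∀ q, adj1 P q → q ∈ D) {v : Pt}
    (hv : v ∈ D) (hvP : adj0 v P) : connIn adj0 D v (P.1, P.2 + 1) := by
  obtain ⟨p1, p2⟩ := P
  obtain ⟨v1, v2⟩ := v
  have hN : (p1, p2 + 1) ∈ D := hnbr _ (by simp [adj1])
  have hW : (p1 - 1, p2) ∈ D := hnbr _ (by simp [adj1])
  have hE : (p1 + 1, p2) ∈ D := hnbr _ (by simp [adj1])
  have step : ∀ {a b : Pt}, a ∈ D → b ∈ D → adj0 a b → connIn adj0 D a b :=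
    fun ha hb h => .single ⟨ha, hb, h⟩
  rw [adj0_iff] at hvP
  simp only at hvP ⊢
  by_cases hvN : v1 = p1 ∧ v2 = p2 + 1
  · obtain ⟨rfl, rfl⟩ := hvN
    exact .refl
  -- `v` is adjacent to the northern neighbour unless it lies below `P`; then it goes through
  -- the western or the eastern one
  by_cases hv2 : p2 ≤ v2
  · exact step hv hN (by rw [adj0_iff]; omega)
  by_cases hv1 : v1 ≤ p1
  · exact (step hv hW (by rw [adj0_iff]; omega)).trans (step hW hN (by rw [adj0_iff]; omega))
  · exact (step hv hE (by rw [adj0_iff]; omega)).trans (step hE hN (by rw [adj0_iff]; omega))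

lemma connIn_of_connIn_insert {adj : Pt → Pt → Prop} [Std.Symm adj] {D : Set Pt} {P u x y : Pt}
    (hu : ∀ v ∈ D, adj v P → connIn adj D v u) (hx : x ∈ D) (hy : y ∈ D)
    (h : connIn adj (insert P D) x y) : connIn adj D x y := by
  suffices key : ∀ z, connIn adj (insert P D) x z →
      (z ∈ D → connIn adj D x z) ∧ (z ∉ D → connIn adj D x u) from (key y h).1 hy
  intro z hz
  induction hz with
  | refl => exact ⟨fun _ => .refl, fun h => absurd hx h⟩
  | @tail b c _ hstep ih =>
    by_cases hb : b ∈ D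
    · have hxb := ih.1 hb
      refine ⟨fun hc => hxb.tail ⟨hb, hc, hstep.2.2⟩, fun hc => hxb.trans (hu b hb ?_)⟩
      obtain rfl : c = P := (mem_insert_iff.mp hstep.2.1).resolve_right hc
      exact hstep.2.2
    · obtain rfl : b = P := (mem_insert_iff.mp hstep.1).resolve_right hb
      exact ⟨fun hc => (ih.2 hb).trans (connIn_symm (hu c hc (symm_of adj hstep.2.2))),
        fun _ => ih.2 hb⟩

lemma ccount_insert_eq {D : Set Pt} {P : Pt} (hnbr : ∀ q, adj1 P q → q ∈ D) :
    ccount (insert P D) = ccount D := by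
  have hN : (P.1, P.2 + 1) ∈ D := hnbr _ (by simp [adj1])
  refine ncard_components_eq_of_subset (subset_insert P D) ?_ fun x hx y hy =>
    connIn_of_connIn_insert (fun v hv hvP => connIn_adj0_north hnbr hv hvP) hx hy
  rintro x (rfl | hx)
  · exact ⟨_, hN, .single ⟨mem_insert _ _, subset_insert _ _ hN, by simp [adj0_iff]⟩⟩
  · exact ⟨x, hx, .refl⟩

lemma compl_insert_eq (P : Pt) (D : Set Pt) : (insert P D)ᶜ = Dᶜ \ {P} := by
  ext
  simp [and_comm]

/-- Needed because `ncard` is `0` on infinite sets. Besides the holes of `D`, `insert P D` can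
only have holes containing a neighbour of `P`. -/
lemma finite_holes_insert {D : Set Pt} (P : Pt) (h : (holes D).Finite) :
    (holes (insert P D)).Finite := by
  refine (h.union ((finite_setOf_adj1 P).image (comp adj1 (Dᶜ \ {P})))).subset ?_
  rintro C ⟨hC, hCfin⟩
  obtain ⟨x, hx, rfl⟩ : ∃ x ∈ Dᶜ \ {P}, C = comp adj1 (Dᶜ \ {P}) x :=
    compl_insert_eq P D ▸ hC
  by_cases hPx : P ∈ comp adj1 Dᶜ x
  · obtain hxP | ⟨q, hqP, hxq⟩ := connIn_diff_or_exists_adj hx.2 hPx.2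
    · exact ((eq_or_mem_of_connIn hxP).elim hx.2 fun hP => hP.2 rfl).elim
    · exact .inr ⟨q, hqP, (comp_congr hxq).symm⟩
  · rw [comp_diff_eq hPx] at hCfin ⊢
    exact .inl ⟨comp_mem_components hx.1, hCfin⟩

lemma hcount_le_hcount_insert {D : Set Pt} {P Q : Pt} (hPQ : adj1 P Q) (hQ : Q ∉ D)
    (h : (holes D).Finite) : hcount D ≤ hcount (insert P D) := by
  have key : ∀ C ∈ holes D, ∃ C' ∈ holes (insert P D), C' ⊆ C ∧ C'.Nonempty := by
    rintro C ⟨hC, hCfin⟩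
    obtain ⟨x, hxC, hxP⟩ : ∃ x ∈ C, x ≠ P := by
      obtain ⟨y, hy, rfl⟩ : ∃ y ∈ Dᶜ, C = comp adj1 Dᶜ y := hC
      by_cases hyP : y = P
      · subst hyP
        exact ⟨Q, ⟨hQ, .single ⟨hy, hQ, hPQ⟩⟩, (adj1_ne hPQ).symm⟩
      · exact ⟨y, mem_comp_self hy, hyP⟩
    have hx : x ∈ Dᶜ \ {P} := ⟨(eq_comp_of_mem hC hxC ▸ hxC : x ∈ comp adj1 Dᶜ x).1, hxP⟩
    have hsub := comp_diff_subset (P := P) hC hxC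
    refine ⟨comp adj1 (Dᶜ \ {P}) x, ?_, hsub, x, mem_comp_self hx⟩
    rw [holes, compl_insert_eq]
    exact ⟨comp_mem_components hx, hCfin.subset hsub⟩
  choose! f hf using key
  refine ncard_le_ncard_of_injOn f (fun C hC => (hf C hC).1) ?_ (finite_holes_insert P h)
  intro C₁ h₁ C₂ h₂ he
  obtain ⟨-, hsub₁, z, hz⟩ := hf C₁ h₁
  obtain ⟨-, hsub₂, -⟩ := hf C₂ h₂
  exact components_eq_of_mem h₁.1 h₂.1 (hsub₁ hz) (hsub₂ (he ▸ hz))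

theorem hole_fill_components_stable_general (D : Set Pt) (P : Pt)
    (hh : hcount (insert P D) < hcount D) :
    ccount (insert P D) = ccount D := by
  have hfin : (holes D).Finite := finite_of_ncard_pos (Nat.zero_lt_of_lt hh)
  have hnbr : ∀ q, adj1 P q → q ∈ D := fun q hq =>
    by_contra fun hq' => (hcount_le_hcount_insert hq hq' hfin).not_gt hh
  exact ccount_insert_eq hnbr

theorem hole_fill_components_stable (D : Set Pt) (hD : D.Finite) (P : Pt)
    (hP : P ∉ D) (hh : hcount (insert P D) < hcount D) :
    ccount (insert P D) = ccount D :=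
  hole_fill_components_stable_general D P hh
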